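/- Let q : ℝⁿ → ℝ and p : ℝⁿ → ℝ be C² functions with all derivatives up to order 2 having at most polynomial growth. Suppose p(x) = p(xₙ) depends only on the last coordinate and L_λ p = 0 on {xₙ > 0}, where L_λ u = Δu − (x/2)·∇u + (λ/2)u, and L_λ q = 0 on {xₙ > 0}. Then ∫_{{xₙ = 0}} (q ∂ₙp − p ∂ₙq) Gₙ dx' = 0, where Gₙ(x) = (4π)^{-n/2} e^{-|x|²/4}. -/

import Mathlib

open MeasureTheory Real Set
open scoped RealInnerProductSpace

/-- The Laplacian on `ℝⁿ` as the sum of second coordinate derivatives. -/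
noncomputable def lap {n : ℕ} (f : EuclideanSpace ℝ (Fin n) → ℝ)
    (x : EuclideanSpace ℝ (Fin n)) : ℝ :=
  ∑ i : Fin n,
    fderiv ℝ (fun y => fderiv ℝ f y (EuclideanSpace.single i 1)) x (EuclideanSpace.single i 1)

/-- The embedding of the hyperplane `{xₙ = 0}`: `x' ↦ (x', 0)`. -/
noncomputable def emb (n : ℕ) (x' : EuclideanSpace ℝ (Fin n)) :
    EuclideanSpace ℝ (Fin (n + 1)) :=
  (WithLp.equiv 2 (Fin (n + 1) → ℝ)).symm
    (Fin.snoc ((WithLp.equiv 2 (Fin n → ℝ)) x') 0)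

/-- The derivative in the last coordinate direction. -/
noncomputable def dn {n : ℕ} (f : EuclideanSpace ℝ (Fin (n + 1)) → ℝ)
    (x : EuclideanSpace ℝ (Fin (n + 1))) : ℝ :=
  fderiv ℝ f x (EuclideanSpace.single (Fin.last n) 1)

/-!
With `w(x) = e^{-|x|²/4}` one has `div (w ∇u) = w (Δu − ½ x·∇u)`, so the field
`A = w (p ∇q − q ∇p)` has divergence `w (p L_λ q − q L_λ p)`, which vanishes on `{xₙ > 0}`, and
the growth hypothesis gives `|A| ≤ C e^{-|x|²/8}`. The divergence theorem on the boxes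
`[-R, R]ⁿ × [ε, R]` shows, as `R → ∞`, that the flux of `A` through `{xₙ = ε}` vanishes, and
dominated convergence lets `ε → 0`. Up to the normalising constant of `Gₙ`, the integral in the
theorem is minus the flux of `A` through `{xₙ = 0}`.
-/

open Filter Topology

section GreenFlux

variable {m : ℕ}

noncomputable def driftLap (u : EuclideanSpace ℝ (Fin m) → ℝ) (x : EuclideanSpace ℝ (Fin m)) :
    ℝ :=
  lap u x - (1 / 2) * ⟪x, gradient u x⟫

noncomputable def greenFlux (q p : EuclideanSpace ℝ (Fin m) → ℝ) (i : Fin m)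
    (x : EuclideanSpace ℝ (Fin m)) : ℝ :=
  exp (-‖x‖ ^ 2 / 4) *
    (p x * fderiv ℝ q x (EuclideanSpace.single i 1)
      - q x * fderiv ℝ p x (EuclideanSpace.single i 1))

theorem hasFDerivAt_exp_neg_norm_sq_div_four {E : Type*} [NormedAddCommGroup E]
    [InnerProductSpace ℝ E] (x : E) :
    HasFDerivAt (fun x : E => exp (-‖x‖ ^ 2 / 4)) ((-exp (-‖x‖ ^ 2 / 4) / 2) • innerSL ℝ x) x := by
  convert ((hasFDerivAt_id x).norm_sq.const_mul (-1 / 4 : ℝ)).exp using 1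
  · ext y
    simp only [id_eq]
    ring_nf
  ext v
  simp only [smul_apply, coe_innerSL_apply, smul_eq_mul, id_eq, ContinuousLinearMap.comp_id,
    nsmul_eq_mul, Nat.cast_ofNat]
  ring_nf

theorem contDiff_fderiv_apply {E : Type*} [NormedAddCommGroup E] [NormedSpace ℝ E]
    {f : E → ℝ} (hf : ContDiff ℝ 2 f) (v : E) : ContDiff ℝ 1 (fun x => fderiv ℝ f x v) :=
  (hf.fderiv_right (by norm_num)).clm_apply contDiff_const

theorem sum_coord_mul_fderiv_single (f : EuclideanSpace ℝ (Fin m) → ℝ)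
    (x : EuclideanSpace ℝ (Fin m)) :
    ∑ i, x i * fderiv ℝ f x (EuclideanSpace.single i 1) = ⟪x, gradient f x⟫ := by
  have hx : ∑ i, x i • EuclideanSpace.single i (1 : ℝ) = x := by
    simpa using (EuclideanSpace.basisFun (Fin m) ℝ).sum_repr x
  calc ∑ i, x i * fderiv ℝ f x (EuclideanSpace.single i 1)
      = fderiv ℝ f x (∑ i, x i • EuclideanSpace.single i 1) := by simp
    _ = ⟪x, gradient f x⟫ := by
      rw [hx, real_inner_comm, gradient, InnerProductSpace.toDual_symm_apply]

theorem fderiv_greenFlux_apply {q p : EuclideanSpace ℝ (Fin m) → ℝ}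
    (hq : ContDiff ℝ 2 q) (hp : ContDiff ℝ 2 p) (i : Fin m) (x v : EuclideanSpace ℝ (Fin m)) :
    fderiv ℝ (greenFlux q p i) x v =
      -exp (-‖x‖ ^ 2 / 4) / 2 * ⟪x, v⟫ *
          (p x * fderiv ℝ q x (EuclideanSpace.single i 1)
            - q x * fderiv ℝ p x (EuclideanSpace.single i 1))
        + exp (-‖x‖ ^ 2 / 4) *
          (fderiv ℝ p x v * fderiv ℝ q x (EuclideanSpace.single i 1)
            + p x * fderiv ℝ (fun y => fderiv ℝ q y (EuclideanSpace.single i 1)) x v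
            - fderiv ℝ q x v * fderiv ℝ p x (EuclideanSpace.single i 1)
            - q x * fderiv ℝ (fun y => fderiv ℝ p y (EuclideanSpace.single i 1)) x v) := by
  have hd : ∀ {f : EuclideanSpace ℝ (Fin m) → ℝ}, ContDiff ℝ 1 f → HasFDerivAt f (fderiv ℝ f x) x :=
    fun hf => (hf.differentiable one_ne_zero x).hasFDerivAt
  have H : HasFDerivAt (greenFlux q p i) _ x := (hasFDerivAt_exp_neg_norm_sq_div_four x).mul
    (((hd (hp.of_le one_le_two)).mul (hd (contDiff_fderiv_apply hq _))).sub
      ((hd (hq.of_le one_le_two)).mul (hd (contDiff_fderiv_apply hp _))))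
  rw [H.fderiv]
  simp only [add_apply, smul_apply, sub_apply, smul_eq_mul, coe_innerSL_apply]
  ring

theorem sum_fderiv_greenFlux {q p : EuclideanSpace ℝ (Fin m) → ℝ}
    (hq : ContDiff ℝ 2 q) (hp : ContDiff ℝ 2 p) (x : EuclideanSpace ℝ (Fin m)) :
    ∑ i, fderiv ℝ (greenFlux q p i) x (EuclideanSpace.single i 1) =
      exp (-‖x‖ ^ 2 / 4) * (p x * driftLap q x - q x * driftLap p x) := by
  simp only [fderiv_greenFlux_apply hq hp, EuclideanSpace.inner_single_right, conj_trivial,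
    one_mul]
  rw [driftLap, driftLap, ← sum_coord_mul_fderiv_single, ← sum_coord_mul_fderiv_single, lap, lap]
  simp only [mul_sub, Finset.mul_sum, ← Finset.sum_sub_distrib]
  refine Finset.sum_congr rfl fun i _ => ?_
  ring

theorem contDiff_greenFlux {q p : EuclideanSpace ℝ (Fin m) → ℝ}
    (hq : ContDiff ℝ 2 q) (hp : ContDiff ℝ 2 p) (i : Fin m) :
    ContDiff ℝ 1 (greenFlux q p i) :=
  ((contDiff_norm_sq ℝ).neg.div_const 4).exp.mul
    (((hp.of_le one_le_two).mul (contDiff_fderiv_apply hq _)).sub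
      ((hq.of_le one_le_two).mul (contDiff_fderiv_apply hp _)))

theorem sum_fderiv_greenFlux_eq_zero {q p : EuclideanSpace ℝ (Fin m) → ℝ}
    (hq : ContDiff ℝ 2 q) (hp : ContDiff ℝ 2 p) {lam : ℝ} {x : EuclideanSpace ℝ (Fin m)}
    (hLq : driftLap q x + lam / 2 * q x = 0) (hLp : driftLap p x + lam / 2 * p x = 0) :
    ∑ i, fderiv ℝ (greenFlux q p i) x (EuclideanSpace.single i 1) = 0 := by
  rw [sum_fderiv_greenFlux hq hp, eq_neg_of_add_eq_zero_left hLq, eq_neg_of_add_eq_zero_left hLp]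
  ring

end GreenFlux

section GrowthBounds

variable {m : ℕ}

theorem abs_fderiv_single_le_norm_gradient (f : EuclideanSpace ℝ (Fin m) → ℝ)
    (x : EuclideanSpace ℝ (Fin m)) (i : Fin m) :
    |fderiv ℝ f x (EuclideanSpace.single i 1)| ≤ ‖gradient f x‖ := by
  rw [gradient, ← InnerProductSpace.toDual_symm_apply]
  simpa using abs_real_inner_le_norm ((InnerProductSpace.toDual ℝ _).symm (fderiv ℝ f x))
    (EuclideanSpace.single i (1 : ℝ))

theorem abs_greenFlux_le {q p : EuclideanSpace ℝ (Fin m) → ℝ} {x : EuclideanSpace ℝ (Fin m)}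
    {M : ℝ} (hM : |q x| + ‖gradient q x‖ + |p x| + ‖gradient p x‖ ≤ M) (i : Fin m) :
    |greenFlux q p i x| ≤ M ^ 2 * exp (-‖x‖ ^ 2 / 4) := by
  have hdq := abs_fderiv_single_le_norm_gradient q x i
  have hdp := abs_fderiv_single_le_norm_gradient p x i
  have hdiff : |p x * fderiv ℝ q x (EuclideanSpace.single i 1)
      - q x * fderiv ℝ p x (EuclideanSpace.single i 1)| ≤ M ^ 2 := by
    refine (abs_sub _ _).trans ?_
    rw [abs_mul, abs_mul]
    have h0 : 0 ≤ |q x| + ‖gradient q x‖ + |p x| + ‖gradient p x‖ := by positivity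
    nlinarith [abs_nonneg (q x), abs_nonneg (p x), norm_nonneg (gradient q x),
      norm_nonneg (gradient p x), abs_nonneg (fderiv ℝ q x (EuclideanSpace.single i 1)),
      abs_nonneg (fderiv ℝ p x (EuclideanSpace.single i 1))]
  rw [greenFlux, abs_mul, abs_of_pos (exp_pos _), mul_comm]
  exact mul_le_mul_of_nonneg_right hdiff (exp_pos _).le

theorem one_add_pow_mul_exp_neg_sq_le (k : ℕ) {t : ℝ} (ht : 0 ≤ t) :
    (1 + t) ^ k * exp (-t ^ 2 / 4) ≤ exp (2 * k ^ 2) * exp (-t ^ 2 / 8) := by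
  have hpow : (1 + t) ^ k ≤ exp (k * t) := by
    rw [exp_nat_mul]
    exact pow_le_pow_left₀ (by linarith) (by linarith [add_one_le_exp t]) k
  calc (1 + t) ^ k * exp (-t ^ 2 / 4) ≤ exp (k * t) * exp (-t ^ 2 / 4) := by gcongr
    _ ≤ exp (2 * k ^ 2) * exp (-t ^ 2 / 8) := by
      rw [← exp_add, ← exp_add, exp_le_exp]
      nlinarith [sq_nonneg (t - 4 * k)]

theorem exists_abs_greenFlux_le_of_growth {q p : EuclideanSpace ℝ (Fin m) → ℝ} {c : ℝ} {k : ℕ}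
    (h : ∀ x, |q x| + ‖gradient q x‖ + |p x| + ‖gradient p x‖ ≤ c * (1 + ‖x‖) ^ k) :
    ∃ C, ∀ i x, |greenFlux q p i x| ≤ C * exp (-(1 / 8) * ‖x‖ ^ 2) := by
  refine ⟨c ^ 2 * exp (2 * (2 * k : ℕ) ^ 2), fun i x => ?_⟩
  calc |greenFlux q p i x| ≤ (c * (1 + ‖x‖) ^ k) ^ 2 * exp (-‖x‖ ^ 2 / 4) :=
        abs_greenFlux_le (h x) i
    _ = c ^ 2 * ((1 + ‖x‖) ^ (2 * k) * exp (-‖x‖ ^ 2 / 4)) := by ring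
    _ ≤ c ^ 2 * (exp (2 * (2 * k : ℕ) ^ 2) * exp (-‖x‖ ^ 2 / 8)) :=
        mul_le_mul_of_nonneg_left (one_add_pow_mul_exp_neg_sq_le _ (norm_nonneg x))
          (by positivity)
    _ = _ := by rw [show -‖x‖ ^ 2 / 8 = -(1 / 8) * ‖x‖ ^ 2 by ring]; ring

end GrowthBounds

section HalfSpaceDivergence

theorem integrable_exp_neg_mul_sum_sq {ι : Type*} [Fintype ι] {b : ℝ} (hb : 0 < b) :
    Integrable (fun y : ι → ℝ => exp (-b * ∑ j, y j ^ 2)) := by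
  simpa [Finset.mul_sum, ← exp_sum, volume_pi] using
    Integrable.fintype_prod (f := fun (_ : ι) (t : ℝ) => exp (-b * t ^ 2)) (μ := fun _ => volume)
      fun _ => integrable_exp_neg_mul_sq hb

theorem tendsto_setIntegral_Icc_neg_natCast_natCast {ι : Type*} [Fintype ι]
    {g : (ι → ℝ) → ℝ} (hg : Integrable g) :
    Tendsto (fun R : ℕ => ∫ y in Icc (fun _ => -(R : ℝ)) (fun _ => (R : ℝ)), g y) atTop
      (𝓝 (∫ y, g y)) := by
  have hmono : Monotone fun R : ℕ => Icc (fun _ : ι => -(R : ℝ)) (fun _ => (R : ℝ)) :=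
    fun R S hRS => Icc_subset_Icc (fun _ => by simpa using hRS) (fun _ => by simpa using hRS)
  have hcover : ⋃ R : ℕ, Icc (fun _ : ι => -(R : ℝ)) (fun _ => (R : ℝ)) = univ := by
    refine eq_univ_of_forall fun y => mem_iUnion.2 ?_
    obtain ⟨R, hR⟩ := exists_nat_ge ‖y‖
    exact ⟨R, fun j => (abs_le.1 ((norm_le_pi_norm y j).trans hR)).1,
      fun j => (abs_le.1 ((norm_le_pi_norm y j).trans hR)).2⟩
  simpa [hcover] using
    tendsto_setIntegral_of_monotone (fun _ => measurableSet_Icc) hmono hg.integrableOn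

theorem tendsto_mul_exp_neg_mul_sq_mul_pow {b : ℝ} (hb : 0 < b) (C : ℝ) (m : ℕ) :
    Tendsto (fun R : ℝ => C * exp (-b * R ^ 2) * (2 * R) ^ m) atTop (𝓝 0) := by
  have hlim : Tendsto (fun R : ℝ => |C| * 2 ^ m * (R ^ m * exp (-R))) atTop (𝓝 0) := by
    simpa using (tendsto_pow_mul_exp_neg_atTop_nhds_zero m).const_mul (|C| * 2 ^ m)
  refine squeeze_zero_norm' ?_ hlim
  filter_upwards [eventually_ge_atTop b⁻¹, eventually_ge_atTop 0] with R hRb hR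
  have hexp : exp (-b * R ^ 2) ≤ exp (-R) := by
    have : 1 ≤ b * R := by rwa [← inv_le_iff_one_le_mul₀' hb]
    rw [exp_le_exp]; nlinarith
  rw [norm_mul, norm_mul, norm_pow, Real.norm_eq_abs, Real.norm_of_nonneg (exp_pos _).le,
    Real.norm_of_nonneg (by positivity : 0 ≤ 2 * R), mul_pow]
  calc |C| * exp (-b * R ^ 2) * (2 ^ m * R ^ m) ≤ |C| * exp (-R) * (2 ^ m * R ^ m) := by gcongr
    _ = _ := by ring

variable {m : ℕ} {b C : ℝ}

theorem sum_sq_insertNth (i : Fin (m + 1)) (t : ℝ) (y : Fin m → ℝ) :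
    ∑ j, i.insertNth t y j ^ 2 = t ^ 2 + ∑ j, y j ^ 2 := by
  simp [Fin.sum_univ_succAbove _ i]

section Slices

variable {G : (Fin (m + 1) → ℝ) → ℝ}

theorem abs_comp_insertNth_le (hG : ∀ x, |G x| ≤ C * exp (-b * ∑ j, x j ^ 2))
    (i : Fin (m + 1)) (t : ℝ) (y : Fin m → ℝ) :
    |G (i.insertNth t y)| ≤ C * exp (-b * t ^ 2) * exp (-b * ∑ j, y j ^ 2) := by
  simpa only [sum_sq_insertNth, mul_add, exp_add, ← mul_assoc] using hG (i.insertNth t y)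

theorem abs_comp_insertNth_le_uniform (hG : ∀ x, |G x| ≤ C * exp (-b * ∑ j, x j ^ 2))
    (hb : 0 ≤ b) (hC : 0 ≤ C) (i : Fin (m + 1)) (t : ℝ)
    (y : Fin m → ℝ) : |G (i.insertNth t y)| ≤ C * exp (-b * ∑ j, y j ^ 2) := by
  refine (abs_comp_insertNth_le hG i t y).trans ?_
  gcongr
  exact mul_le_of_le_one_right hC (exp_le_one_iff.2 (by nlinarith [sq_nonneg t]))

theorem integrable_comp_insertNth (hG : ∀ x, |G x| ≤ C * exp (-b * ∑ j, x j ^ 2))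
    (hGc : Continuous G) (hb : 0 < b) (hC : 0 ≤ C)
    (i : Fin (m + 1)) (t : ℝ) : Integrable fun y => G (i.insertNth t y) :=
  ((integrable_exp_neg_mul_sum_sq hb).const_mul C).mono'
    (hGc.comp (continuous_const.finInsertNth i continuous_id)).aestronglyMeasurable
    (ae_of_all _ (abs_comp_insertNth_le_uniform hG hb.le hC i t))

theorem continuous_integral_comp_insertNth (hG : ∀ x, |G x| ≤ C * exp (-b * ∑ j, x j ^ 2))
    (hGc : Continuous G) (hb : 0 < b) (hC : 0 ≤ C)
    (i : Fin (m + 1)) : Continuous fun t => ∫ y, G (i.insertNth t y) :=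
  continuous_of_dominated
    (fun t => (hGc.comp (continuous_const.finInsertNth i continuous_id)).aestronglyMeasurable)
    (fun t => ae_of_all _ (abs_comp_insertNth_le_uniform hG hb.le hC i t))
    ((integrable_exp_neg_mul_sum_sq hb).const_mul C)
    (ae_of_all _ fun _ => hGc.comp (by fun_prop))

theorem norm_setIntegral_comp_insertNth_le (hG : ∀ x, |G x| ≤ C * exp (-b * ∑ j, x j ^ 2))
    (hb : 0 ≤ b) (hC : 0 ≤ C) {R t : ℝ} (hR : 0 ≤ R)
    (ht : R ≤ |t|) {u v : Fin m → ℝ} (hu : ∀ j, -R ≤ u j) (hv : ∀ j, v j ≤ R)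
    (i : Fin (m + 1)) :
    ‖∫ y in Icc u v, G (i.insertNth t y)‖ ≤ C * exp (-b * R ^ 2) * (2 * R) ^ m := by
  have hpt : ∀ y ∈ Icc u v, ‖G (i.insertNth t y)‖ ≤ C * exp (-b * R ^ 2) := by
    intro y _
    refine (abs_comp_insertNth_le hG i t y).trans ?_
    have hRt : R ^ 2 ≤ t ^ 2 := by rw [← sq_abs t]; gcongr
    have hy : 0 ≤ ∑ j, y j ^ 2 := by positivity
    calc C * exp (-b * t ^ 2) * exp (-b * ∑ j, y j ^ 2) ≤ C * exp (-b * R ^ 2) * 1 :=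
          mul_le_mul (mul_le_mul_of_nonneg_left (exp_le_exp.2 (by nlinarith)) hC)
            (exp_le_one_iff.2 (by nlinarith)) (exp_pos _).le (by positivity)
      _ = C * exp (-b * R ^ 2) := mul_one _
  have hvol : volume.real (Icc u v) ≤ (2 * R) ^ m := by
    calc volume.real (Icc u v) ≤ volume.real (Icc (fun _ : Fin m => -R) fun _ => R) :=
          measureReal_mono (Icc_subset_Icc hu hv) isCompact_Icc.measure_lt_top.ne
      _ = (2 * R) ^ m := by
          rw [measureReal_def, Real.volume_Icc_pi_toReal fun _ => by linarith]
          simp [two_mul]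
  refine (norm_setIntegral_le_of_norm_le_const isCompact_Icc.measure_lt_top hpt).trans ?_
  gcongr

end Slices

theorem tendsto_setIntegral_face_zero {G : (Fin (m + 1) → ℝ) → ℝ}
    (hG : ∀ x, |G x| ≤ C * exp (-b * ∑ j, x j ^ 2)) (hb : 0 < b) (hC : 0 ≤ C)
    {u v : ℕ → Fin m → ℝ} {t : ℕ → ℝ} (hu : ∀ (R : ℕ) j, -(R : ℝ) ≤ u R j)
    (hv : ∀ (R : ℕ) j, v R j ≤ R) (ht : ∀ R : ℕ, (R : ℝ) ≤ |t R|) (i : Fin (m + 1)) :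
    Tendsto (fun R : ℕ => ∫ y in Icc (u R) (v R), G (i.insertNth (t R) y)) atTop (𝓝 0) :=
  squeeze_zero_norm
    (fun R => norm_setIntegral_comp_insertNth_le hG hb.le hC R.cast_nonneg (ht R) (hu R) (hv R) i)
    ((tendsto_mul_exp_neg_mul_sq_mul_pow hb C m).comp tendsto_natCast_atTop_atTop)

theorem sum_integral_faces_eq_zero {F : Fin (m + 1) → (Fin (m + 1) → ℝ) → ℝ}
    (hF : ∀ i, ContDiff ℝ 1 (F i)) {lo hi : Fin (m + 1) → ℝ} (hle : lo ≤ hi)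
    (hdiv : ∀ y ∈ univ.pi fun i => Ioo (lo i) (hi i), ∑ i, fderiv ℝ (F i) y (Pi.single i 1) = 0) :
    ∑ i, ((∫ y in Icc (lo ∘ i.succAbove) (hi ∘ i.succAbove), F i (i.insertNth (hi i) y))
      - ∫ y in Icc (lo ∘ i.succAbove) (hi ∘ i.succAbove), F i (i.insertNth (lo i) y)) = 0 := by
  have hcont : Continuous fun y => ∑ i, fderiv ℝ (F i) y (Pi.single i 1) :=
    continuous_finsetSum _ fun i _ =>
      ((hF i).continuous_fderiv one_ne_zero).clm_apply continuous_const
  rw [← integral_divergence_of_hasFDerivAt_off_countable' lo hi hle F (fun i y => fderiv ℝ (F i) y)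
    ∅ countable_empty (fun i => (hF i).continuous.continuousOn)
    (fun y _ i => ((hF i).differentiable one_ne_zero y).hasFDerivAt)
    (hcont.continuousOn.integrableOn_compact isCompact_Icc), volume_pi,
    ← setIntegral_congr_set Measure.univ_pi_Ioo_ae_eq_Icc]
  exact setIntegral_eq_zero_of_forall_eq_zero hdiv

noncomputable def halfCubeCorner (m : ℕ) (R ε : ℝ) : Fin (m + 1) → ℝ :=
  Function.update (fun _ => -R) (Fin.last m) ε

@[simp]
theorem halfCubeCorner_last (m : ℕ) (R ε : ℝ) : halfCubeCorner m R ε (Fin.last m) = ε :=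
  Function.update_self ..

@[simp]
theorem halfCubeCorner_castSucc (R ε : ℝ) (j : Fin m) : halfCubeCorner m R ε j.castSucc = -R :=
  Function.update_of_ne (Fin.castSucc_lt_last j).ne ..

theorem neg_le_halfCubeCorner {R ε : ℝ} (hε : 0 ≤ ε) (hR : 0 ≤ R) (i : Fin (m + 1)) :
    -R ≤ halfCubeCorner m R ε i := by
  rcases Fin.eq_castSucc_or_eq_last i with ⟨j, rfl⟩ | rfl
  · rw [halfCubeCorner_castSucc]
  · rw [halfCubeCorner_last]; linarith

theorem halfCubeCorner_le {R ε : ℝ} (hR : 0 ≤ R) (hεR : ε ≤ R) :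
    halfCubeCorner m R ε ≤ fun _ => R := by
  intro i
  rcases Fin.eq_castSucc_or_eq_last i with ⟨j, rfl⟩ | rfl
  · rw [halfCubeCorner_castSucc]; linarith
  · rwa [halfCubeCorner_last]

variable {F : Fin (m + 1) → (Fin (m + 1) → ℝ) → ℝ}

theorem integral_comp_insertNth_last_eq_zero_of_pos (hF : ∀ i, ContDiff ℝ 1 (F i))
    (hdiv : ∀ y, 0 < y (Fin.last m) → ∑ i, fderiv ℝ (F i) y (Pi.single i 1) = 0)
    (hb : 0 < b) (hC : 0 ≤ C) (hbound : ∀ i y, |F i y| ≤ C * exp (-b * ∑ j, y j ^ 2))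
    {ε : ℝ} (hε : 0 < ε) :
    ∫ y, F (Fin.last m) ((Fin.last m).insertNth ε y) = 0 := by
  set lo : ℕ → Fin (m + 1) → ℝ := fun R => halfCubeCorner m R ε
  set hi : ℕ → Fin (m + 1) → ℝ := fun R _ => R
  set face : Fin (m + 1) → ℕ → ℝ → ℝ := fun i R t =>
    ∫ y in Icc (lo R ∘ i.succAbove) (hi R ∘ i.succAbove), F i (i.insertNth t y) with hface_def
  have hface (i : Fin (m + 1)) {t : ℕ → ℝ} (ht : ∀ R : ℕ, (R : ℝ) ≤ |t R|) :
      Tendsto (fun R => face i R (t R)) atTop (𝓝 0) :=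
    tendsto_setIntegral_face_zero (hbound i) hb hC
      (fun R j => neg_le_halfCubeCorner hε.le R.cast_nonneg _) (fun _ _ => le_rfl) ht i
  have hbottom : Tendsto (fun R => face (Fin.last m) R ε) atTop
      (𝓝 (∫ y, F (Fin.last m) ((Fin.last m).insertNth ε y))) := by
    have hlo_face (R : ℕ) : lo R ∘ (Fin.last m).succAbove = fun _ => -(R : ℝ) := by
      funext j; simp [lo, Fin.succAbove_last]
    simp only [hface_def, hlo_face]
    exact tendsto_setIntegral_Icc_neg_natCast_natCast
      (integrable_comp_insertNth (hbound _) ((hF _).continuous) hb hC _ ε)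
  have hsides : Tendsto (fun R : ℕ => ∑ j : Fin m, (face j.castSucc R R - face j.castSucc R (-R))
      + face (Fin.last m) R R) atTop (𝓝 0) := by
    simpa using (tendsto_finsetSum (Finset.univ : Finset (Fin m)) fun j _ =>
      (hface j.castSucc fun R => le_abs_self _).sub
        (hface j.castSucc fun R => (abs_neg (R : ℝ)).symm ▸ le_abs_self _)).add
      (hface (Fin.last m) fun R => le_abs_self _)
  have hbox : ∀ᶠ R : ℕ in atTop, ∑ j : Fin m, (face j.castSucc R R - face j.castSucc R (-R))
      + face (Fin.last m) R R = face (Fin.last m) R ε := by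
    filter_upwards [eventually_ge_atTop ⌈ε⌉₊] with R hR
    have key : ∑ i, (face i R (hi R i) - face i R (lo R i)) = 0 :=
      sum_integral_faces_eq_zero hF
        (halfCubeCorner_le R.cast_nonneg ((Nat.le_ceil ε).trans (by exact_mod_cast hR)))
        fun y hy => hdiv y (hε.trans (halfCubeCorner_last m R ε ▸ (hy _ (mem_univ _)).1))
    rw [Fin.sum_univ_castSucc] at key
    simp only [lo, halfCubeCorner_castSucc, halfCubeCorner_last] at key
    linarith
  exact tendsto_nhds_unique hbottom (hsides.congr' hbox)

theorem integral_comp_snoc_zero_eq_zero_of_divergence_free (hF : ∀ i, ContDiff ℝ 1 (F i))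
    (hdiv : ∀ y, 0 < y (Fin.last m) → ∑ i, fderiv ℝ (F i) y (Pi.single i 1) = 0)
    (hb : 0 < b) (hbound : ∀ i y, |F i y| ≤ C * exp (-b * ∑ j, y j ^ 2)) :
    ∫ y, F (Fin.last m) (Fin.snoc y 0) = 0 := by
  have hC : 0 ≤ C := by simpa using (abs_nonneg _).trans (hbound 0 0)
  have hJ := continuous_integral_comp_insertNth (hbound _) (hF (Fin.last m)).continuous hb hC
    (Fin.last m)
  have hzero :
      closure (Ioi 0) ⊆ (fun t => ∫ y, F (Fin.last m) ((Fin.last m).insertNth t y)) ⁻¹' {0} :=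
    (isClosed_eq hJ continuous_const).closure_subset_iff.2 fun _ hε =>
      integral_comp_insertNth_last_eq_zero_of_pos hF hdiv hb hC hbound hε
  simpa [Fin.insertNth_last'] using hzero (by simp : (0 : ℝ) ∈ closure (Ioi 0))

end HalfSpaceDivergence

theorem integral_comp_emb_eq_zero_of_divergence_free {n : ℕ} {b C : ℝ}
    {F : Fin (n + 1) → EuclideanSpace ℝ (Fin (n + 1)) → ℝ} (hF : ∀ i, ContDiff ℝ 1 (F i))
    (hdiv : ∀ x : EuclideanSpace ℝ (Fin (n + 1)), 0 < x (Fin.last n) →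
      ∑ i, fderiv ℝ (F i) x (EuclideanSpace.single i 1) = 0)
    (hb : 0 < b) (hbound : ∀ i x, |F i x| ≤ C * exp (-b * ‖x‖ ^ 2)) :
    ∫ x', F (Fin.last n) (emb n x') = 0 := by
  let e := (PiLp.continuousLinearEquiv 2 ℝ fun _ : Fin (n + 1) => ℝ).symm
  calc ∫ x', F (Fin.last n) (emb n x') = ∫ y, (F (Fin.last n) ∘ e) (Fin.snoc y 0) :=
        (PiLp.volume_preserving_ofLp _).integral_comp
          (MeasurableEquiv.toLp 2 _).symm.measurableEmbedding fun y => F _ (e (Fin.snoc y 0))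
    _ = 0 := integral_comp_snoc_zero_eq_zero_of_divergence_free
        (fun i => (hF i).comp e.contDiff)
        (fun y hy => by simpa [e, e.comp_right_fderiv] using hdiv (e y) hy) hb
        (fun i y => by simpa [e, EuclideanSpace.real_norm_sq_eq] using hbound i (e y))

theorem stmt6_general (n : ℕ) (lam : ℝ) (q p : EuclideanSpace ℝ (Fin (n + 1)) → ℝ)
    (hq : ContDiff ℝ 2 q) (hp : ContDiff ℝ 2 p)
    (hgrowth : ∃ (c : ℝ) (k : ℕ), ∀ x,
      |q x| + ‖gradient q x‖ + |lap q x| + |p x| + ‖gradient p x‖ + |lap p x|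
        ≤ c * (1 + ‖x‖) ^ k)
    (hLp : ∀ x, 0 < x (Fin.last n) →
      lap p x - (1 / 2) * ⟪x, gradient p x⟫ + lam / 2 * p x = 0)
    (hLq : ∀ x, 0 < x (Fin.last n) →
      lap q x - (1 / 2) * ⟪x, gradient q x⟫ + lam / 2 * q x = 0) :
    ∫ x' : EuclideanSpace ℝ (Fin n),
        (q (emb n x') * dn p (emb n x') - p (emb n x') * dn q (emb n x'))
          * ((4 * π) ^ (-((n : ℝ) + 1) / 2) * Real.exp (-‖emb n x'‖ ^ 2 / 4)) = 0 := by
  obtain ⟨c, k, hc⟩ := hgrowth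
  obtain ⟨C, hC⟩ := exists_abs_greenFlux_le_of_growth (q := q) (p := p) fun x => by
    linarith [hc x, abs_nonneg (lap q x), abs_nonneg (lap p x)]
  have hflux := integral_comp_emb_eq_zero_of_divergence_free (contDiff_greenFlux hq hp)
    (fun x hx => sum_fderiv_greenFlux_eq_zero hq hp (hLq x hx) (hLp x hx)) (by norm_num) hC
  calc _ = ∫ x', -(4 * π) ^ (-((n : ℝ) + 1) / 2) * greenFlux q p (Fin.last n) (emb n x') := by
        congr 1; funext x'; rw [greenFlux, dn, dn]; ring
    _ = 0 := by rw [integral_const_mul, hflux, mul_zero]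

/-- Gaussian-weighted Green's identity on the half-space `{xₙ > 0}`: if `p = p(xₙ)` and `q`
both satisfy `L_λ u = Δu − (x/2)·∇u + (λ/2)u = 0` on `{xₙ > 0}`, then the boundary term
`∫_{xₙ=0} (q ∂ₙp − p ∂ₙq) Gₙ₊₁ dx'` vanishes. -/
theorem stmt6 (n : ℕ) (lam : ℝ) (q p : EuclideanSpace ℝ (Fin (n + 1)) → ℝ) (P : ℝ → ℝ)
    (hq : ContDiff ℝ 2 q) (hp : ContDiff ℝ 2 p)
    (hpP : ∀ x, p x = P (x (Fin.last n)))
    (hgrowth : ∃ (c : ℝ) (k : ℕ), ∀ x,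
      |q x| + ‖gradient q x‖ + |lap q x| + |p x| + ‖gradient p x‖ + |lap p x|
        ≤ c * (1 + ‖x‖) ^ k)
    (hLp : ∀ x, 0 < x (Fin.last n) →
      lap p x - (1 / 2) * ⟪x, gradient p x⟫ + lam / 2 * p x = 0)
    (hLq : ∀ x, 0 < x (Fin.last n) →
      lap q x - (1 / 2) * ⟪x, gradient q x⟫ + lam / 2 * q x = 0) :
    ∫ x' : EuclideanSpace ℝ (Fin n),
        (q (emb n x') * dn p (emb n x') - p (emb n x') * dn q (emb n x'))
          * ((4 * π) ^ (-((n : ℝ) + 1) / 2) * Real.exp (-‖emb n x'‖ ^ 2 / 4)) = 0 :=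
  stmt6_general n lam q p hq hp hgrowth hLp hLq
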